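/- Suppose max_{S∈𝕊} λ_S < ∞ and max_{S∈𝕊} sup r̄_S < ∞, and let α*_𝕊 be the minimiser of L over H_𝕊. Then Var( ∑_{S∈𝕊} α*_S(X_S) ) + ∑_{S∈𝕊} E[ α*_S(X_S)² / (λ_S r̄_S(X_S)) ] = Var(a(X)) − L(α*_𝕊); in particular this quantity is at most Var(a(X)). -/

import Mathlib

open MeasureTheory ProbabilityTheory

/-- `g` depends only on the coordinates in `S`. -/
def DependsOnCoords {d : ℕ} (S : Finset (Fin d)) (g : (Fin d → ℝ) → ℝ) : Prop :=
  ∀ x y : Fin d → ℝ, (∀ i ∈ S, x i = y i) → g x = g y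

/-- Membership in `H_S`. -/
def MemH {d : ℕ} (μ : Measure (Fin d → ℝ)) (S : Finset (Fin d))
    (g : (Fin d → ℝ) → ℝ) : Prop :=
  MemLp g 2 μ ∧ DependsOnCoords S g ∧ ∫ x, g x ∂μ = 0

/-- The objective functional `L`. -/
noncomputable def objective {d : ℕ} (μ : Measure (Fin d → ℝ))
    (𝕊 : Finset (Finset (Fin d))) (lam : Finset (Fin d) → ℝ)
    (r : Finset (Fin d) → (Fin d → ℝ) → ℝ) (a : (Fin d → ℝ) → ℝ)
    (α : Finset (Fin d) → (Fin d → ℝ) → ℝ) : ℝ :=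
  variance (fun x => a x - ∑ S ∈ 𝕊, α S x) μ
    + ∑ S ∈ 𝕊, ∫ x, (α S x) ^ 2 / (lam S * r S x) ∂μ

/-!
Scaling the minimiser along the ray `s ↦ s • α*` stays inside `H_𝕊`, and along that ray
`L(s • α*) = Var(a) - 2 s Cov(a, ∑ α*_S) + s² Q(α*)`, where `Q` is the quadratic form
`Var(∑ α_S) + ∑ E[α_S² / (λ_S r̄_S)]`. Stationarity at `s = 1` gives `Cov(a, ∑ α*_S) = Q(α*)`,
hence `L(α*) = Var(a) - Q(α*)`; the bound follows from `L ≥ 0`.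
-/

lemma eq_of_forall_le_quadratic {A B : ℝ}
    (h : ∀ s : ℝ, A - 2 * B ≤ s ^ 2 * A - 2 * s * B) : B = A := by
  have hmin : IsLocalMin (fun s : ℝ => s ^ 2 * A - 2 * s * B) 1 :=
    Filter.Eventually.of_forall fun s => by simpa using h s
  have hderiv : HasDerivAt (fun s : ℝ => s ^ 2 * A - 2 * s * B) (2 * A - 2 * B) 1 :=
    ((hasDerivAt_pow 2 (1 : ℝ)).mul_const A |>.fun_sub
      (((hasDerivAt_id' (1 : ℝ)).const_mul 2).mul_const B)).congr_deriv (by norm_num)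
  linarith [hmin.hasDerivAt_eq_zero hderiv]

variable {d : ℕ} {μ : Measure (Fin d → ℝ)} {𝕊 : Finset (Finset (Fin d))}
  {lam : Finset (Fin d) → ℝ} {r : Finset (Fin d) → (Fin d → ℝ) → ℝ} {a : (Fin d → ℝ) → ℝ}
  {α : Finset (Fin d) → (Fin d → ℝ) → ℝ}

lemma MemH.const_mul {S : Finset (Fin d)} {g : (Fin d → ℝ) → ℝ} (hg : MemH μ S g) (c : ℝ) :
    MemH μ S (fun x => c * g x) := by
  obtain ⟨hLp, hdep, hmean⟩ := hg
  refine ⟨hLp.const_mul c, fun x y hxy => congrArg (c * ·) (hdep x y hxy), ?_⟩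
  rw [integral_const_mul, hmean, mul_zero]

noncomputable def penalty (μ : Measure (Fin d → ℝ)) (𝕊 : Finset (Finset (Fin d)))
    (lam : Finset (Fin d) → ℝ) (r : Finset (Fin d) → (Fin d → ℝ) → ℝ)
    (α : Finset (Fin d) → (Fin d → ℝ) → ℝ) : ℝ :=
  ∑ S ∈ 𝕊, ∫ x, (α S x) ^ 2 / (lam S * r S x) ∂μ

noncomputable def quadraticForm (μ : Measure (Fin d → ℝ)) (𝕊 : Finset (Finset (Fin d)))
    (lam : Finset (Fin d) → ℝ) (r : Finset (Fin d) → (Fin d → ℝ) → ℝ)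
    (α : Finset (Fin d) → (Fin d → ℝ) → ℝ) : ℝ :=
  variance (fun x => ∑ S ∈ 𝕊, α S x) μ + penalty μ 𝕊 lam r α

lemma penalty_nonneg (hlam : ∀ S ∈ 𝕊, 0 < lam S) (hr : ∀ S ∈ 𝕊, ∀ x, 0 < r S x) :
    0 ≤ penalty μ 𝕊 lam r α :=
  Finset.sum_nonneg fun S hS => integral_nonneg fun x =>
    div_nonneg (sq_nonneg _) (mul_pos (hlam S hS) (hr S hS x)).le

lemma penalty_const_mul (c : ℝ) :
    penalty μ 𝕊 lam r (fun S x => c * α S x) = c ^ 2 * penalty μ 𝕊 lam r α := by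
  simp only [penalty, Finset.mul_sum, ← integral_const_mul, mul_pow, mul_div_assoc]

lemma quadraticForm_const_mul (c : ℝ) :
    quadraticForm μ 𝕊 lam r (fun S x => c * α S x) = c ^ 2 * quadraticForm μ 𝕊 lam r α := by
  simp only [quadraticForm, penalty_const_mul, ← Finset.mul_sum, variance_const_mul, mul_add]

lemma objective_nonneg (hlam : ∀ S ∈ 𝕊, 0 < lam S) (hr : ∀ S ∈ 𝕊, ∀ x, 0 < r S x) :
    0 ≤ objective μ 𝕊 lam r a α :=
  add_nonneg (variance_nonneg _ _) (penalty_nonneg hlam hr)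

lemma objective_eq_variance_sub_covariance_add_quadraticForm [IsFiniteMeasure μ]
    (ha : MemLp a 2 μ) (hα : ∀ S ∈ 𝕊, MemLp (α S) 2 μ) :
    objective μ 𝕊 lam r a α
      = variance a μ - 2 * cov[a, fun x => ∑ S ∈ 𝕊, α S x; μ] + quadraticForm μ 𝕊 lam r α := by
  rw [objective, variance_fun_sub ha (memLp_finsetSum 𝕊 hα), quadraticForm, penalty]
  ring

lemma covariance_eq_quadraticForm_of_le_objective_const_mul [IsFiniteMeasure μ]
    (ha : MemLp a 2 μ) (hα : ∀ S ∈ 𝕊, MemLp (α S) 2 μ)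
    (hmin : ∀ s : ℝ, objective μ 𝕊 lam r a α ≤ objective μ 𝕊 lam r a (fun S x => s * α S x)) :
    cov[a, fun x => ∑ S ∈ 𝕊, α S x; μ] = quadraticForm μ 𝕊 lam r α := by
  refine eq_of_forall_le_quadratic fun s => ?_
  have hsα : ∀ S ∈ 𝕊, MemLp (fun x => s * α S x) 2 μ := fun S hS => (hα S hS).const_mul s
  have h := hmin s
  rw [objective_eq_variance_sub_covariance_add_quadraticForm ha hα,
    objective_eq_variance_sub_covariance_add_quadraticForm ha hsα, quadraticForm_const_mul] at h
  simp only [← Finset.mul_sum, covariance_const_mul_right] at h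
  linarith

theorem quadratic_form_at_minimiser_general
    (d : ℕ)
    (μ : Measure (Fin d → ℝ)) [IsProbabilityMeasure μ]
    (𝕊 : Finset (Finset (Fin d)))
    (lam : Finset (Fin d) → ℝ) (hlam : ∀ S ∈ 𝕊, 0 < lam S)
    (r : Finset (Fin d) → (Fin d → ℝ) → ℝ)
    (hrpos : ∀ S ∈ 𝕊, ∀ x, 0 < r S x)
    (a : (Fin d → ℝ) → ℝ) (ha : MemLp a 2 μ)
    (αstar : Finset (Fin d) → (Fin d → ℝ) → ℝ)
    (hαstarH : ∀ S ∈ 𝕊, MemH μ S (αstar S))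
    (hαstarMin : ∀ β : Finset (Fin d) → (Fin d → ℝ) → ℝ,
      (∀ S ∈ 𝕊, MemH μ S (β S)) →
      objective μ 𝕊 lam r a αstar ≤ objective μ 𝕊 lam r a β) :
    variance (fun x => ∑ S ∈ 𝕊, αstar S x) μ
          + ∑ S ∈ 𝕊, ∫ x, (αstar S x) ^ 2 / (lam S * r S x) ∂μ
        = variance a μ - objective μ 𝕊 lam r a αstar ∧
    variance (fun x => ∑ S ∈ 𝕊, αstar S x) μ
          + ∑ S ∈ 𝕊, ∫ x, (αstar S x) ^ 2 / (lam S * r S x) ∂μ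
        ≤ variance a μ := by
  have hαLp : ∀ S ∈ 𝕊, MemLp (αstar S) 2 μ := fun S hS => (hαstarH S hS).1
  have hcov := covariance_eq_quadraticForm_of_le_objective_const_mul ha hαLp fun s =>
    hαstarMin _ fun S hS => (hαstarH S hS).const_mul s
  have hL : objective μ 𝕊 lam r a αstar = variance a μ - quadraticForm μ 𝕊 lam r αstar := by
    rw [objective_eq_variance_sub_covariance_add_quadraticForm ha hαLp, hcov]
    ring
  change quadraticForm μ 𝕊 lam r αstar = _ ∧ quadraticForm μ 𝕊 lam r αstar ≤ _
  have hL_nonneg := objective_nonneg (μ := μ) (a := a) (α := αstar) hlam hrpos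
  constructor <;> linarith

/-- The value of the quadratic form `Q` at the minimiser:
`Q(α*_𝕊) = Var(a(X)) − L(α*_𝕊) ≤ Var(a(X))`. -/
theorem quadratic_form_at_minimiser
    (d : ℕ) (hd : 2 ≤ d)
    (μ : Measure (Fin d → ℝ)) [IsProbabilityMeasure μ]
    (𝕊 : Finset (Finset (Fin d))) (h𝕊ne : 𝕊.Nonempty)
    (h𝕊proper : ∀ S ∈ 𝕊, S ≠ Finset.univ)
    (lam : Finset (Fin d) → ℝ) (hlam : ∀ S ∈ 𝕊, 0 < lam S)
    (r : Finset (Fin d) → (Fin d → ℝ) → ℝ)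
    (hrpos : ∀ S ∈ 𝕊, ∀ x, 0 < r S x)
    (hrdep : ∀ S ∈ 𝕊, DependsOnCoords S (r S))
    (hrmeas : ∀ S ∈ 𝕊, Measurable (r S))
    (hrint : ∀ S ∈ 𝕊, ∫ x, r S x ∂μ = 1)
    (C : ℝ) (hrC : ∀ S ∈ 𝕊, ∀ x, r S x ≤ C)
    (a : (Fin d → ℝ) → ℝ) (ha : MemLp a 2 μ)
    (αstar : Finset (Fin d) → (Fin d → ℝ) → ℝ)
    (hαstarH : ∀ S ∈ 𝕊, MemH μ S (αstar S))
    (hαstarMin : ∀ β : Finset (Fin d) → (Fin d → ℝ) → ℝ,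
      (∀ S ∈ 𝕊, MemH μ S (β S)) →
      objective μ 𝕊 lam r a αstar ≤ objective μ 𝕊 lam r a β) :
    variance (fun x => ∑ S ∈ 𝕊, αstar S x) μ
          + ∑ S ∈ 𝕊, ∫ x, (αstar S x) ^ 2 / (lam S * r S x) ∂μ
        = variance a μ - objective μ 𝕊 lam r a αstar ∧
    variance (fun x => ∑ S ∈ 𝕊, αstar S x) μ
          + ∑ S ∈ 𝕊, ∫ x, (αstar S x) ^ 2 / (lam S * r S x) ∂μ
        ≤ variance a μ :=
  quadratic_form_at_minimiser_general d μ 𝕊 lam hlam r hrpos a ha αstar hαstarH hαstarMin
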